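/- arXiv:math/0501414 — 4 statements merged into one kernel-verified Lean document; each statement's English description precedes it below -/
import Mathlib

section
/- Let 1 = r₀ ≤ a < b and let λ be the smallest positive root of cot(λ·ln(b/a)) = λ·ln(a). If μ > λ, then the solution y of the ODE y'' + (1 + 4μ²·χ_{[a,b]}(r))/(4r²)·y = 0 with y(1) = 0 and y'(1) = 1 vanishes at some r > 1. -/
open Real Set

/-
Under `x = eᵗ`, `y = √x · u t`, the Euler equation `y'' + (1 + 4m²)/(4x²) · y = 0` becomes
`u'' + m² u = 0`, so on each of `[1, a]`, `[a, b]`, `[b, ∞)` there are explicit solutions: lifts of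
affine functions and of sinusoids. Compare `y` with the lift of `sin (μ (t - log a) + φ)`,
`φ = arctan (μ log a)`, on the kick, continued by its tangent lines outside it. The tangent line at
`log a` vanishes at `t = 0`, so the comparison function vanishes at `x = 1` together with `y`, and
their Wronskian is zero on all three pieces. A positive root `λ` of `cot (λ log (b/a)) = λ log a`
has `λ log (b/a) + arctan (λ log a) ≥ π/2`, so for `μ > λ` the phase at `log b` exceeds `π/2`:
either the sinusoid reaches `π` inside the kick, or it leaves the kick positive and decreasing and
its tangent line reaches zero later. At a simple zero of the comparison function the vanishing
Wronskian forces `y = 0`.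
-/

theorem pi_div_two_le_add_arctan_of_cot_eq {θ s : ℝ} (hθ : 0 < θ) (hs : cot θ = s) :
    π / 2 ≤ θ + arctan s := by
  by_contra! h
  have hs_lt : -(π / 2) < arctan s := neg_pi_div_two_lt_arctan s
  have hcot : cot θ = tan (π / 2 - θ) := by
    rw [tan_pi_div_two_sub, tan_eq_sin_div_cos, inv_div, cot_eq_cos_div_sin]
  have : tan (arctan s) < tan (π / 2 - θ) :=
    tan_lt_tan_of_lt_of_lt_pi_div_two hs_lt (by linarith) (by linarith)
  rw [tan_arctan, ← hcot, hs] at this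
  exact this.false

theorem ContDiffOn.continuousOn_deriv_of_differentiableAt {f : ℝ → ℝ} {s : Set ℝ}
    (hf : ContDiffOn ℝ 1 f s) (hs : UniqueDiffOn ℝ s) (hd : ∀ x ∈ s, DifferentiableAt ℝ f x) :
    ContinuousOn (deriv f) s :=
  (hf.continuousOn_derivWithin hs le_rfl).congr fun x hx => ((hd x hx).derivWithin (hs x hx)).symm

theorem ContDiffOn.differentiableAt_of_Ici {f : ℝ → ℝ} {c x : ℝ} (hf : ContDiffOn ℝ 1 f (Ici c))
    (hc : DifferentiableAt ℝ f c) (hx : c ≤ x) : DifferentiableAt ℝ f x := by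
  rcases hx.eq_or_lt with rfl | hx
  · exact hc
  · exact (hf.differentiableOn one_ne_zero x hx.le).differentiableAt (Ici_mem_nhds hx)

theorem hasDerivAt_deriv_of_deriv_deriv_add_mul_eq_zero {f : ℝ → ℝ} {x k : ℝ}
    (h : deriv (deriv f) x + k * f x = 0) (hk : k ≠ 0) (hx : f x ≠ 0) :
    HasDerivAt (deriv f) (-k * f x) x := by
  -- `deriv` is `0` off the differentiability locus, so a nonzero value certifies differentiability.
  have h' : deriv (deriv f) x = -k * f x := by linarith
  have hd : DifferentiableAt ℝ (deriv f) x :=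
    differentiableAt_of_deriv_ne_zero (h' ▸ mul_ne_zero (neg_ne_zero.2 hk) hx)
  exact h' ▸ hd.hasDerivAt

def wronskian (f f' g g' : ℝ → ℝ) (x : ℝ) : ℝ := f x * g' x - f' x * g x

theorem wronskian_eq_of_hasDerivAt {f f' g g' q : ℝ → ℝ} {c e : ℝ} (hce : c ≤ e)
    (hW : ContinuousOn (wronskian f f' g g') (Icc c e))
    (hf : ∀ x ∈ Ioo c e, HasDerivAt f (f' x) x)
    (hf' : ∀ x ∈ Ioo c e, HasDerivAt f' (-q x * f x) x)
    (hg : ∀ x ∈ Ioo c e, HasDerivAt g (g' x) x)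
    (hg' : ∀ x ∈ Ioo c e, HasDerivAt g' (-q x * g x) x) :
    wronskian f f' g g' e = wronskian f f' g g' c := by
  rcases hce.eq_or_lt with rfl | hce
  · rfl
  have hW' : ∀ x ∈ Ioo c e, HasDerivAt (wronskian f f' g g') 0 x := fun x hx =>
    (((hf x hx).mul (hg' x hx)).sub ((hf' x hx).mul (hg x hx))).congr_deriv (by ring)
  obtain ⟨x, hx, hslope⟩ := exists_hasDerivAt_eq_slope _ _ hce hW hW'
  rw [eq_comm, div_eq_zero_iff, sub_eq_zero] at hslope
  exact hslope.resolve_right (sub_ne_zero.2 hce.ne')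

structure IsEulerSolOn (y y' : ℝ → ℝ) (m c e : ℝ) : Prop where
  continuousOn : ContinuousOn y (Icc c e)
  continuousOn_deriv : ContinuousOn y' (Icc c e)
  hasDerivAt : ∀ x ∈ Ioo c e, HasDerivAt y (y' x) x
  hasDerivAt_deriv : ∀ x ∈ Ioo c e, HasDerivAt y' (-((1 + 4 * m ^ 2) / (4 * x ^ 2)) * y x) x

namespace IsEulerSolOn

variable {y y' z z' : ℝ → ℝ} {m c e : ℝ}

theorem mono (h : IsEulerSolOn y y' m c e) {c' e' : ℝ} (hc : c ≤ c') (he : e' ≤ e) :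
    IsEulerSolOn y y' m c' e' where
  continuousOn := h.continuousOn.mono (Icc_subset_Icc hc he)
  continuousOn_deriv := h.continuousOn_deriv.mono (Icc_subset_Icc hc he)
  hasDerivAt x hx := h.hasDerivAt x (Ioo_subset_Ioo hc he hx)
  hasDerivAt_deriv x hx := h.hasDerivAt_deriv x (Ioo_subset_Ioo hc he hx)

theorem wronskian_eq (hz : IsEulerSolOn z z' m c e) (hy : IsEulerSolOn y y' m c e) (hce : c ≤ e) :
    wronskian z z' y y' e = wronskian z z' y y' c :=
  wronskian_eq_of_hasDerivAt hce
    ((hz.continuousOn.mul hy.continuousOn_deriv).sub (hz.continuousOn_deriv.mul hy.continuousOn))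
    hz.hasDerivAt hz.hasDerivAt_deriv hy.hasDerivAt hy.hasDerivAt_deriv

theorem eq_zero_of_wronskian_eq_zero (hz : IsEulerSolOn z z' m c e)
    (hy : IsEulerSolOn y y' m c e) (hce : c ≤ e) (hW : wronskian z z' y y' c = 0)
    (hze : z e = 0) (hz'e : z' e ≠ 0) : y e = 0 := by
  have := hz.wronskian_eq hy hce
  rw [hW, wronskian, hze, zero_mul, zero_sub, neg_eq_zero] at this
  exact (mul_eq_zero.1 this).resolve_left hz'e

end IsEulerSolOn

noncomputable def eulerLift (u : ℝ → ℝ) (x : ℝ) : ℝ := √x * u (log x)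

noncomputable def eulerLiftDeriv (u u' : ℝ → ℝ) (x : ℝ) : ℝ := (u (log x) / 2 + u' (log x)) / √x

section EulerLift

variable {u u' : ℝ → ℝ} {m x : ℝ}

theorem hasDerivAt_eulerLift (hx : 0 < x) (hu : HasDerivAt u (u' (log x)) (log x)) :
    HasDerivAt (eulerLift u) (eulerLiftDeriv u u' x) x := by
  have hs : √x ^ 2 = x := sq_sqrt hx.le
  have hs0 : √x ≠ 0 := (sqrt_pos.2 hx).ne'
  refine ((hasDerivAt_sqrt hx.ne').mul (hu.comp x (hasDerivAt_log hx.ne'))).congr_deriv ?_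
  simp only [eulerLiftDeriv, Function.comp_apply]
  field_simp
  rw [hs]
  ring

theorem hasDerivAt_eulerLiftDeriv (hx : 0 < x) (hu : HasDerivAt u (u' (log x)) (log x))
    (hu' : HasDerivAt u' (-m ^ 2 * u (log x)) (log x)) :
    HasDerivAt (eulerLiftDeriv u u') (-((1 + 4 * m ^ 2) / (4 * x ^ 2)) * eulerLift u x) x := by
  have hs : √x ^ 2 = x := sq_sqrt hx.le
  have hs0 : √x ≠ 0 := (sqrt_pos.2 hx).ne'
  have hlog := hasDerivAt_log hx.ne'
  refine ((((hu.comp x hlog).div_const 2).add (hu'.comp x hlog)).div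
    (hasDerivAt_sqrt hx.ne') hs0).congr_deriv ?_
  simp only [eulerLift, Function.comp_apply, Pi.add_apply]
  field_simp
  rw [show √x ^ 4 = x ^ 2 by rw [show 4 = 2 * 2 from rfl, pow_mul, hs], hs]
  ring

theorem isEulerSolOn_eulerLift {c e : ℝ} (hc : 0 < c) (hu : ∀ t, HasDerivAt u (u' t) t)
    (hu' : ∀ t, HasDerivAt u' (-m ^ 2 * u t) t) :
    IsEulerSolOn (eulerLift u) (eulerLiftDeriv u u') m c e where
  continuousOn x hx :=
    (hasDerivAt_eulerLift (hc.trans_le hx.1) (hu (log x))).continuousAt.continuousWithinAt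
  continuousOn_deriv x hx := (hasDerivAt_eulerLiftDeriv (hc.trans_le hx.1) (hu (log x))
    (hu' (log x))).continuousAt.continuousWithinAt
  hasDerivAt x hx := hasDerivAt_eulerLift (hc.trans hx.1) (hu (log x))
  hasDerivAt_deriv x hx := hasDerivAt_eulerLiftDeriv (hc.trans hx.1) (hu (log x)) (hu' (log x))

end EulerLift

theorem IsEulerSolOn.eq_zero_of_eulerLift {u u' y y' : ℝ → ℝ} {m c e : ℝ}
    (hu : IsEulerSolOn (eulerLift u) (eulerLiftDeriv u u') m c e) (hy : IsEulerSolOn y y' m c e)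
    (hc : 0 < c) (hce : c ≤ e) (hW : wronskian (eulerLift u) (eulerLiftDeriv u u') y y' c = 0)
    (he : u (log e) = 0) (he' : u' (log e) ≠ 0) : y e = 0 :=
  hu.eq_zero_of_wronskian_eq_zero hy hce hW (by simp [eulerLift, he])
    (by simpa [eulerLiftDeriv, he] using ⟨he', (sqrt_pos.2 (hc.trans_le hce)).ne'⟩)

theorem wronskian_eulerLift_congr {u u' v v' y y' : ℝ → ℝ} {x : ℝ} (h : u (log x) = v (log x))
    (h' : u' (log x) = v' (log x)) :
    wronskian (eulerLift u) (eulerLiftDeriv u u') y y' x =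
      wronskian (eulerLift v) (eulerLiftDeriv v v') y y' x := by
  simp only [wronskian, eulerLift, eulerLiftDeriv, h, h']

theorem isEulerSolOn_sin {μ t₀ φ c e : ℝ} (hc : 0 < c) :
    IsEulerSolOn (eulerLift fun t => sin (μ * (t - t₀) + φ))
      (eulerLiftDeriv (fun t => sin (μ * (t - t₀) + φ)) fun t => μ * cos (μ * (t - t₀) + φ))
      μ c e := by
  have hθ : ∀ t, HasDerivAt (fun t => μ * (t - t₀) + φ) μ t := fun t =>
    ((((hasDerivAt_id t).sub_const t₀).const_mul μ).add_const φ).congr_deriv (mul_one μ)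
  exact isEulerSolOn_eulerLift hc (fun t => (hθ t).sin.congr_deriv (mul_comm _ _))
    fun t => ((hθ t).cos.const_mul μ).congr_deriv (by ring)

theorem isEulerSolOn_affine {p q t₀ c e : ℝ} (hc : 0 < c) :
    IsEulerSolOn (eulerLift fun t => p + q * (t - t₀))
      (eulerLiftDeriv (fun t => p + q * (t - t₀)) fun _ => q) 0 c e :=
  isEulerSolOn_eulerLift hc
    (fun t => ((((hasDerivAt_id t).sub_const t₀).const_mul q).const_add p).congr_deriv (mul_one q))
    fun t => (hasDerivAt_const t q).congr_deriv (by ring)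

section Kick

variable {y y' : ℝ → ℝ} {a b μ : ℝ}

theorem wronskian_sin_eq_zero (ha : 1 ≤ a) (h₁ : IsEulerSolOn y y' 0 1 a) (hy : y 1 = 0) :
    wronskian (eulerLift fun t => sin (μ * (t - log a) + arctan (μ * log a)))
      (eulerLiftDeriv (fun t => sin (μ * (t - log a) + arctan (μ * log a)))
        fun t => μ * cos (μ * (t - log a) + arctan (μ * log a))) y y' a = 0 := by
  set φ := arctan (μ * log a)
  -- `φ` is chosen so that the tangent line of the sinusoid at `log a` passes through the origin.
  have htangent : sin φ + μ * cos φ * (0 - log a) = 0 := by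
    rw [← tan_mul_cos (cos_arctan_pos _).ne', tan_arctan]
    ring
  rw [wronskian_eulerLift_congr (v := fun t => sin φ + μ * cos φ * (t - log a))
    (v' := fun _ => μ * cos φ) (by simp) (by simp),
    (isEulerSolOn_affine one_pos).wronskian_eq h₁ ha]
  simp only [wronskian, eulerLift, log_one, htangent, hy]
  simp

theorem exists_zero_of_kick (ha : 1 ≤ a) (hab : a < b) (hμ : 0 < μ)
    (hphase : π / 2 < μ * log (b / a) + arctan (μ * log a))
    (h₁ : IsEulerSolOn y y' 0 1 a) (h₂ : IsEulerSolOn y y' μ a b)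
    (h₃ : ∀ e, IsEulerSolOn y y' 0 b e) (hy : y 1 = 0) : ∃ r, 1 < r ∧ y r = 0 := by
  have ha₀ : 0 < a := by linarith
  have hb₀ : 0 < b := by linarith
  have hWa := wronskian_sin_eq_zero (μ := μ) ha h₁ hy
  set φ := arctan (μ * log a)
  set θ := μ * log (b / a) + φ
  have hθ : μ * (log b - log a) + φ = θ := by simp only [θ, log_div hb₀.ne' ha₀.ne']
  rcases lt_or_ge θ π with hθπ | hθπ
  · set p := sin θ
    set q := μ * cos θ
    have hp : 0 < p := sin_pos_of_pos_of_lt_pi (by linarith [pi_pos]) hθπ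
    have hq : q < 0 :=
      mul_neg_of_pos_of_neg hμ (cos_neg_of_pi_div_two_lt_of_lt hphase (by linarith))
    set r := exp (log b - p / q)
    have hbr : b < r := by
      rw [← exp_log hb₀]
      exact exp_lt_exp.2 (by linarith [div_neg_of_pos_of_neg hp hq])
    refine ⟨r, by linarith, (isEulerSolOn_affine (p := p) (q := q) (t₀ := log b)
      hb₀).eq_zero_of_eulerLift (h₃ r) hb₀ hbr.le ?_ ?_ hq.ne⟩
    · rw [wronskian_eulerLift_congr (v := fun t => sin (μ * (t - log a) + φ))
        (v' := fun t => μ * cos (μ * (t - log a) + φ)) (by simp [p, hθ]) (by simp [q, hθ]),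
        (isEulerSolOn_sin ha₀).wronskian_eq h₂ hab.le, hWa]
    · simp only [r, log_exp]
      field_simp [hq.ne]
      ring
  · set r := exp (log a + (π - φ) / μ)
    have hφ : φ < π / 2 := arctan_lt_pi_div_two _
    have har : a < r := by
      rw [← exp_log ha₀]
      exact exp_lt_exp.2 (lt_add_of_pos_right _ (div_pos (by linarith [pi_pos]) hμ))
    have hrb : r ≤ b := by
      rw [← exp_log hb₀]
      refine exp_le_exp.2 ?_
      have : (π - φ) / μ ≤ log b - log a := by
        rw [div_le_iff₀ hμ]
        linarith
      linarith
    have hphase_r : μ * (log r - log a) + φ = π := by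
      simp only [r, log_exp]
      field_simp
      ring
    refine ⟨r, by linarith, (isEulerSolOn_sin ha₀).eq_zero_of_eulerLift (h₂.mono le_rfl hrb) ha₀
      har.le hWa ?_ ?_⟩
    · simp [hphase_r]
    · simp [hphase_r, hμ.ne']

end Kick

theorem isEulerSolOn_of_kicked_ode {y : ℝ → ℝ} {a b μ m c e : ℝ}
    (hy : ContDiffOn ℝ 1 y (Ici 1)) (hd₁ : DifferentiableAt ℝ y 1)
    (hode : ∀ r : ℝ, 1 < r → r ≠ a → r ≠ b →
      deriv (deriv y) r + (1 + 4 * μ ^ 2 * (Icc a b).indicator (fun _ => 1) r) / (4 * r ^ 2) * y r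
        = 0)
    (hne : ∀ r, 1 < r → y r ≠ 0) (hc : 1 ≤ c)
    (hq : ∀ x ∈ Ioo c e,
      x ≠ a ∧ x ≠ b ∧ 4 * μ ^ 2 * (Icc a b).indicator (fun _ => 1) x = 4 * m ^ 2) :
    IsEulerSolOn y (deriv y) m c e := by
  have hd : ∀ x ∈ Ici (1 : ℝ), DifferentiableAt ℝ y x := fun _ ↦ hy.differentiableAt_of_Ici hd₁
  have hsub : Icc c e ⊆ Ici 1 := fun x hx => hc.trans hx.1
  refine ⟨hy.continuousOn.mono hsub,
    (hy.continuousOn_deriv_of_differentiableAt (uniqueDiffOn_Ici 1) hd).mono hsub,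
    fun x hx => (hd x (hsub (Ioo_subset_Icc_self hx))).hasDerivAt, fun x hx => ?_⟩
  obtain ⟨hxa, hxb, hxq⟩ := hq x hx
  have hx₁ : 1 < x := hc.trans_lt hx.1
  have h := hode x hx₁ hxa hxb
  rw [hxq] at h
  exact hasDerivAt_deriv_of_deriv_deriv_add_mul_eq_zero h
    (div_ne_zero (by positivity) (by positivity)) (hne x hx₁)

theorem stmt_3_general (a b lam μ : ℝ) (ha : 1 ≤ a) (hab : a < b)
    (hlam_pos : 0 < lam)
    (hlam_root : Real.cot (lam * Real.log (b / a)) = lam * Real.log a)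
    (hμ : lam < μ)
    (y : ℝ → ℝ)
    (hy : ContDiffOn ℝ 1 y (Set.Ici 1))
    (hode : ∀ r : ℝ, 1 < r → r ≠ a → r ≠ b →
      deriv (deriv y) r
        + (1 + 4 * μ ^ 2 * (Set.Icc a b).indicator (fun _ => (1 : ℝ)) r) / (4 * r ^ 2) * y r
        = 0)
    (h0 : y 1 = 0) (h0' : deriv y 1 = 1) :
    ∃ r : ℝ, 1 < r ∧ y r = 0 := by
  -- Arguing by contradiction supplies `y r ≠ 0`, which is what turns `hode` into a genuine
  -- second derivative (see `hasDerivAt_deriv_of_deriv_deriv_add_mul_eq_zero`).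
  by_contra! hne
  have hL : 0 < log (b / a) := log_pos ((one_lt_div (by linarith)).2 hab)
  have hphase : π / 2 < μ * log (b / a) + arctan (μ * log a) := by
    have := pi_div_two_le_add_arctan_of_cot_eq (mul_pos hlam_pos hL) hlam_root
    have := arctan_strictMono.monotone (mul_le_mul_of_nonneg_right hμ.le (log_nonneg ha))
    have := mul_lt_mul_of_pos_right hμ hL
    linarith
  have hd₁ : DifferentiableAt ℝ y 1 := differentiableAt_of_deriv_ne_zero (by simp [h0'])
  have h₁ : IsEulerSolOn y (deriv y) 0 1 a :=
    isEulerSolOn_of_kicked_ode hy hd₁ hode hne le_rfl fun x hx => by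
      have hx' : x ∉ Icc a b := fun h => hx.2.not_ge h.1
      simp [hx.2.ne, (hx.2.trans hab).ne, hx']
  have h₂ : IsEulerSolOn y (deriv y) μ a b :=
    isEulerSolOn_of_kicked_ode hy hd₁ hode hne ha fun x hx => by
      simp [hx.1.ne', hx.2.ne, Ioo_subset_Icc_self hx]
  have h₃ : ∀ e, IsEulerSolOn y (deriv y) 0 b e := fun e =>
    isEulerSolOn_of_kicked_ode hy hd₁ hode hne (ha.trans hab.le) fun x hx => by
      have hx' : x ∉ Icc a b := fun h => hx.1.not_ge h.2
      simp [(hab.trans hx.1).ne', hx.1.ne', hx']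
  obtain ⟨r, hr, hyr⟩ := exists_zero_of_kick ha hab (hlam_pos.trans hμ) hphase h₁ h₂ h₃ h0
  exact hne r hr hyr

/-- Linear kick lemma: if `1 ≤ a < b`, `λ` is the smallest positive root of
`cot (λ log (b/a)) = λ log a`, and `μ > λ`, then any `C¹` solution on `[1, ∞)` of the
kicked Sturm–Liouville equation `y'' + (1 + 4 μ² χ_{[a,b]}(r)) / (4 r²) · y = 0`
with `y 1 = 0`, `y' 1 = 1` vanishes at some `r > 1`. -/
theorem stmt_3 (a b lam μ : ℝ) (ha : 1 ≤ a) (hab : a < b)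
    (hlam_pos : 0 < lam)
    (hlam_root : Real.cot (lam * Real.log (b / a)) = lam * Real.log a)
    (hlam_min : ∀ x : ℝ, 0 < x → Real.cot (x * Real.log (b / a)) = x * Real.log a → lam ≤ x)
    (hμ : lam < μ)
    (y : ℝ → ℝ)
    (hy : ContDiffOn ℝ 1 y (Set.Ici 1))
    (hode : ∀ r : ℝ, 1 < r → r ≠ a → r ≠ b →
      deriv (deriv y) r
        + (1 + 4 * μ ^ 2 * (Set.Icc a b).indicator (fun _ => (1 : ℝ)) r) / (4 * r ^ 2) * y r
        = 0)
    (h0 : y 1 = 0) (h0' : deriv y 1 = 1) :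
    ∃ r : ℝ, 1 < r ∧ y r = 0 :=
  stmt_3_general a b lam μ ha hab hlam_pos hlam_root hμ y hy hode h0 h0'
end

section
/- Let 1 ≤ a < b, μ > 0 with μ·ln(b/a) < π, and suppose cot(μ·ln(b/a)) > -1/(μ·ln a) (with ln a > 0, or interpret the condition as cos(μ·ln(b/a)) ≥ 0 when a = 1). Then the function y(r) = r^{1/2}·(ln(a)·cos(μ·ln(r/a)) + (1/μ)·sin(μ·ln(r/a))) is strictly positive for all r ∈ [a, b]. -/
open Real Set

/-- If `1 ≤ a < b`, `μ > 0`, `μ log (b/a) < π`, `log a > 0` and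
`cot (μ log (b/a)) > -1 / (μ log a)`, then
`y r = √r (log a · cos (μ log (r/a)) + (1/μ) sin (μ log (r/a)))` is strictly positive
on `[a, b]`. -/
theorem stmt_4 (a b μ : ℝ) (ha : 1 ≤ a) (hab : a < b) (hμ : 0 < μ)
    (hsmall : μ * Real.log (b / a) < π)
    (hla : 0 < Real.log a)
    (hcot : Real.cot (μ * Real.log (b / a)) > -1 / (μ * Real.log a)) :
    ∀ r ∈ Set.Icc a b,
      0 < Real.sqrt r *
        (Real.log a * Real.cos (μ * Real.log (r / a))
          + (1 / μ) * Real.sin (μ * Real.log (r / a))) := by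
  intro r hr
  have ha0 : (0:ℝ) < a := by linarith
  have hr0 : (0:ℝ) < r := by linarith [hr.1]
  have hsqrt : 0 < Real.sqrt r := Real.sqrt_pos.mpr hr0
  set L := Real.log a with hL
  set T := μ * Real.log (b / a) with hT
  set θ := μ * Real.log (r / a) with hθ
  have hT0 : 0 < T := by
    have : 0 < Real.log (b / a) := Real.log_pos (by rw [lt_div_iff₀ ha0]; linarith)
    positivity
  have hθ0 : 0 ≤ θ := by
    have : 0 ≤ Real.log (r / a) :=
      Real.log_nonneg (by rw [le_div_iff₀ ha0]; linarith [hr.1])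
    positivity
  have hθT : θ ≤ T := by
    have : Real.log (r / a) ≤ Real.log (b / a) := by
      apply Real.log_le_log (by positivity)
      gcongr
      exact hr.2
    nlinarith
  have hsinT : 0 < Real.sin T := Real.sin_pos_of_pos_of_lt_pi hT0 hsmall
  have hfT : 0 < L * Real.cos T + (1/μ) * Real.sin T := by
    rw [Real.cot_eq_cos_div_sin] at hcot
    have h1 : (-1 / (μ * L)) * Real.sin T < (Real.cos T / Real.sin T) * Real.sin T :=
      mul_lt_mul_of_pos_right hcot hsinT
    rw [div_mul_cancel₀ _ hsinT.ne'] at h1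
    have hμL : 0 < μ * L := by positivity
    rw [div_mul_eq_mul_div, neg_one_mul, neg_div, neg_lt] at h1
    have h2 : 0 < μ * L * Real.cos T + Real.sin T := by
      have h3 := (lt_div_iff₀ hμL).mp h1
      nlinarith
    have := div_pos h2 hμ
    calc (0:ℝ) < (μ * L * Real.cos T + Real.sin T) / μ := this
      _ = L * Real.cos T + (1/μ) * Real.sin T := by field_simp
  have hmain : 0 < L * Real.cos θ + (1/μ) * Real.sin θ := by
    rcases eq_or_lt_of_le hθ0 with h0 | h0
    · rw [← h0]; simpa using hla
    · have hsinθ : 0 < Real.sin θ :=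
        Real.sin_pos_of_pos_of_lt_pi h0 (lt_of_le_of_lt hθT hsmall)
      have hsinTθ : 0 ≤ Real.sin (T - θ) :=
        Real.sin_nonneg_of_nonneg_of_le_pi (by linarith) (by linarith)
      have key : (L * Real.cos θ + (1/μ) * Real.sin θ) * Real.sin T
          = L * Real.sin (T - θ) + (L * Real.cos T + (1/μ) * Real.sin T) * Real.sin θ := by
        rw [Real.sin_sub]; ring
      nlinarith
  exact mul_pos hsqrt hmain
end

section
/- Let b : [0,∞) → (0,∞) be continuous and suppose the solution w of w'' + b(r)·w = 0, w(0) = 0, w'(0) = 1 is monotone increasing and bounded on [0,∞). Then liminf_{r→∞} b(r) = 0. -/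
open Set Filter Topology

/-!
Since `w` is increasing, `w' ≥ 0` on `[0, ∞)`, and `w a > 0` for some `a > 0` because
`w' 0 = 1`. If `b ≥ ε > 0` on some `[R, ∞)` with `R ≥ a`, then `w'' = -b w ≤ -ε w a < 0` there,
so `w'` eventually becomes negative, a contradiction. Hence `b` is frequently below every
`ε > 0`, and being positive its lower limit is `0`.
-/

lemma HasDerivAt.exists_gt_of_pos {f : ℝ → ℝ} {f' x : ℝ} (hf : HasDerivAt f f' x)
    (hf' : 0 < f') : ∃ y, x < y ∧ f x < f y := by
  have hslope : Tendsto (slope f x) (𝓝[>] x) (𝓝 f') :=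
    (hasDerivWithinAt_iff_tendsto_slope' (lt_irrefl x)).mp hf.hasDerivWithinAt
  obtain ⟨y, hy_pos, hxy⟩ :=
    ((hslope.eventually (lt_mem_nhds hf')).and self_mem_nhdsWithin).exists
  exact ⟨y, hxy, (slope_pos_iff hxy).mp hy_pos⟩

lemma MonotoneOn.deriv_nonneg_of_le {f : ℝ → ℝ} {a x : ℝ} (hf : MonotoneOn f (Ici a))
    (hx : a ≤ x) (hd : DifferentiableAt ℝ f x) : 0 ≤ deriv f x := by
  have hacc : AccPt x (𝓟 (Ici x)) := by
    rw [accPt_principal_iff_nhdsWithin, Ici_sdiff_left]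
    infer_instance
  exact hd.hasDerivAt.hasDerivWithinAt.nonneg_of_monotoneOn hacc (hf.mono (Ici_subset_Ici.2 hx))

lemma exists_neg_of_deriv_le_neg {f : ℝ → ℝ} (hf : Differentiable ℝ f) {R c : ℝ} (hc : 0 < c)
    (hf' : ∀ x, R ≤ x → deriv f x ≤ -c) : ∃ x, R ≤ x ∧ f x < 0 := by
  set x := R + |f R| / c + 1
  have hRx : R ≤ x := by
    have : 0 ≤ |f R| / c := by positivity
    linarith
  have hdecay : f x - f R ≤ -c * (x - R) :=
    (convex_Ici R).image_sub_le_mul_sub_of_deriv_le hf.continuous.continuousOn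
      hf.differentiableOn (fun y hy => hf' y (interior_subset hy)) R self_mem_Ici x hRx hRx
  have hxR : c * (x - R) = |f R| + c := by
    simp only [x]
    field_simp
    ring
  exact ⟨x, hRx, by linarith [le_abs_self (f R)]⟩

lemma liminf_eq_zero_of_frequently_le {α : Type*} {l : Filter α} {f : α → ℝ}
    (hf : ∀ᶠ x in l, 0 ≤ f x) (hsmall : ∀ ε, 0 < ε → ∃ᶠ x in l, f x ≤ ε) : liminf f l = 0 := by
  refine le_antisymm (le_of_forall_pos_le_add fun ε hε => ?_) ?_
  · simpa using liminf_le_of_frequently_le (hsmall ε hε) ⟨0, hf⟩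
  · exact le_liminf_of_le (IsCoboundedUnder.of_frequently_le (hsmall 1 one_pos)) hf

theorem stmt_6_general (b w : ℝ → ℝ)
    (hb_pos : ∀ r : ℝ, 0 ≤ r → 0 < b r)
    (hw : ContDiff ℝ 2 w)
    (hode : ∀ r : ℝ, 0 ≤ r → deriv (deriv w) r + b r * w r = 0)
    (h0 : w 0 = 0) (h0' : deriv w 0 = 1)
    (hmono : MonotoneOn w (Set.Ici 0)) :
    Filter.liminf b Filter.atTop = 0 := by
  have hw' : Differentiable ℝ w := hw.differentiable (by norm_num)
  have hw'' : Differentiable ℝ (deriv w) := hw.differentiable_deriv_two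
  obtain ⟨a, ha, hwa⟩ : ∃ a, 0 < a ∧ 0 < w a := by
    simpa [h0] using (hw' 0).hasDerivAt.exists_gt_of_pos (h0' ▸ one_pos)
  have hwa_le : ∀ x, a ≤ x → w a ≤ w x := fun x hx =>
    hmono ha.le (ha.le.trans hx) hx
  refine liminf_eq_zero_of_frequently_le
    (eventually_ge_atTop 0 |>.mono fun r hr => (hb_pos r hr).le) fun ε hε => ?_
  rw [frequently_atTop]
  intro R
  by_contra! hbig
  obtain ⟨x, hx, hneg⟩ := exists_neg_of_deriv_le_neg hw'' (mul_pos hε hwa) (R := max R a)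
    fun x hx => by
      have hbx : ε ≤ b x := (hbig x (le_of_max_le_left hx)).le
      have hwx : w a ≤ w x := hwa_le x (le_of_max_le_right hx)
      nlinarith [hode x (ha.le.trans (le_of_max_le_right hx))]
  have hx0 : 0 ≤ x := ha.le.trans (le_of_max_le_right hx)
  linarith [hmono.deriv_nonneg_of_le hx0 (hw' x)]

/-- If `b : [0,∞) → (0,∞)` is continuous and the solution `w` of
`w'' + b w = 0`, `w 0 = 0`, `w' 0 = 1` is monotone increasing and bounded on `[0,∞)`,
then `liminf_{r→∞} b r = 0`. -/
theorem stmt_6 (b w : ℝ → ℝ)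
    (hb_cont : ContinuousOn b (Set.Ici 0))
    (hb_pos : ∀ r : ℝ, 0 ≤ r → 0 < b r)
    (hw : ContDiff ℝ 2 w)
    (hode : ∀ r : ℝ, 0 ≤ r → deriv (deriv w) r + b r * w r = 0)
    (h0 : w 0 = 0) (h0' : deriv w 0 = 1)
    (hmono : MonotoneOn w (Set.Ici 0))
    (hbdd : BddAbove (w '' Set.Ici 0)) :
    Filter.liminf b Filter.atTop = 0 :=
  stmt_6_general b w hb_pos hw hode h0 h0' hmono
end

section
/- The function b(r) = 2r/((1 + r²)²·arctan(r)) for r > 0 (extended continuously by b(0) = 2) is an SL-bifurcator: the solution of w'' + b(r)·w = 0 with w(0) = 0, w'(0) = 1 is monotone increasing and bounded on [0,∞). -/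
/-!
The solution is `arctan`: since `arctan'' r = -2r / (1 + r²)²`, the coefficient `b` is exactly
`-arctan'' / arctan`, and `arctan` is increasing and bounded by `π / 2`.
-/

open Real Set

theorem Real.hasDerivAt_one_div_one_add_sq (r : ℝ) :
    HasDerivAt (fun x : ℝ => 1 / (1 + x ^ 2)) (-(2 * r) / (1 + r ^ 2) ^ 2) r := by
  have h := ((hasDerivAt_pow 2 r).const_add 1).inv (by positivity : (1 : ℝ) + r ^ 2 ≠ 0)
  simpa [one_div, neg_div, Pi.inv_def] using h

theorem Real.deriv_deriv_arctan (r : ℝ) :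
    deriv (deriv arctan) r = -(2 * r) / (1 + r ^ 2) ^ 2 := by
  rw [deriv_arctan]
  exact (hasDerivAt_one_div_one_add_sq r).deriv

/-- The function `b r = 2r / ((1 + r²)² arctan r)` (with `b 0 = 2`) is an SL-bifurcator:
the solution of `w'' + b w = 0`, `w 0 = 0`, `w' 0 = 1` is monotone increasing and
bounded on `[0, ∞)`. -/
theorem stmt_9 :
    ∃ w : ℝ → ℝ,
      ContDiff ℝ 2 w ∧
      (∀ r : ℝ, 0 ≤ r →
        deriv (deriv w) r
          + (if r = 0 then (2 : ℝ)
              else 2 * r / ((1 + r ^ 2) ^ 2 * Real.arctan r)) * w r = 0) ∧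
      w 0 = 0 ∧ deriv w 0 = 1 ∧
      MonotoneOn w (Set.Ici 0) ∧ BddAbove (w '' Set.Ici 0) := by
  refine ⟨arctan, contDiff_arctan, fun r hr => ?_, arctan_zero, by simp [Real.deriv_arctan],
    arctan_mono.monotoneOn _, ⟨π / 2, ?_⟩⟩
  · rw [deriv_deriv_arctan]
    rcases hr.eq_or_lt with rfl | hr
    · simp
    · have harctan : arctan r ≠ 0 := (arctan_pos.mpr hr).ne'
      rw [if_neg hr.ne']
      field_simp
      ring
  · rintro _ ⟨x, -, rfl⟩
    exact (arctan_lt_pi_div_two x).le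
end
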